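/- Let f be a transcendental entire function and let m > 1. Then, for all sufficiently large r, M( (1/(2m))·r^{1/(2m)}·log r , f ) ≥ ( (1/(2m))·M(r^{1/(2m)},f)^{1/(2m)}·log M(r^{1/(2m)},f) )^m. (In the paper's notation: M(log r^{(1/(2m)) r^{1/(2m)}}, f) ≥ (log M(r^{1/(2m)},f)^{(1/(2m)) M(r^{1/(2m)},f)^{1/(2m)}})^m for sufficiently large r.) -/

import Mathlib

/-
With `s = r^{1/(2m)}` the left-hand argument is `s log s ≥ s`, so by monotonicity of `M` the
left side is at least `L = M(s, f)`. Since `log L ≤ 2m L^{1/(2m)}`, the base on the right is at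
most `L^{1/m}`, and the right side is at most `L` once `L ≥ 1`, which holds for large `r`
because `M(s, f) → ∞` for a non-constant entire function.
-/

open Filter MeasureTheory Topology

/-- The maximum modulus `M(r, f) = max {|f z| : |z| = r}`. -/
noncomputable def maxMod (f : ℂ → ℂ) (r : ℝ) : ℝ :=
  sSup ((fun z => ‖f z‖) '' Metric.sphere (0 : ℂ) r)

/-- The minimum modulus `L(r, f) = min {|f z| : |z| = r}`. -/
noncomputable def minMod (f : ℂ → ℂ) (r : ℝ) : ℝ :=
  sInf ((fun z => ‖f z‖) '' Metric.sphere (0 : ℂ) r)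

/-- A transcendental entire function: entire and not a polynomial. -/
def TranscendentalEntire (f : ℂ → ℂ) : Prop :=
  Differentiable ℂ f ∧ ¬ ∃ p : Polynomial ℂ, ∀ z, f z = p.eval z

lemma maxMod_nonneg (f : ℂ → ℂ) (r : ℝ) : 0 ≤ maxMod f r :=
  Real.sSup_nonneg (by rintro y ⟨z, _, rfl⟩; positivity)

lemma bddAbove_norm_image_sphere {f : ℂ → ℂ} (hf : Continuous f) (r : ℝ) :
    BddAbove ((fun z => ‖f z‖) '' Metric.sphere (0 : ℂ) r) :=
  ((isCompact_sphere (0 : ℂ) r).image (continuous_norm.comp hf)).bddAbove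

lemma norm_le_maxMod {f : ℂ → ℂ} (hf : Continuous f) (z : ℂ) : ‖f z‖ ≤ maxMod f ‖z‖ :=
  le_csSup (bddAbove_norm_image_sphere hf _) ⟨z, by simp, rfl⟩

lemma maxMod_mono {f : ℂ → ℂ} (hf : Differentiable ℂ f) {a b : ℝ} (ha : 0 ≤ a)
    (hab : a ≤ b) : maxMod f a ≤ maxMod f b := by
  rcases (ha.trans hab).eq_or_lt with rfl | hb
  · rw [le_antisymm hab ha]
  refine Real.sSup_le ?_ (maxMod_nonneg f b)
  rintro _ ⟨z, hz, rfl⟩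
  have hz_closure : z ∈ closure (Metric.ball (0 : ℂ) b) := by
    rw [closure_ball (0 : ℂ) hb.ne', Metric.mem_closedBall]
    exact (Metric.mem_sphere.mp hz).trans_le hab
  refine Complex.norm_le_of_forall_mem_frontier_norm_le Metric.isBounded_ball
    hf.diffContOnCl (fun w hw => ?_) hz_closure
  rw [frontier_ball (0 : ℂ) hb.ne'] at hw
  exact le_csSup (bddAbove_norm_image_sphere hf.continuous b) ⟨w, hw, rfl⟩

lemma TranscendentalEntire.tendsto_maxMod_atTop {f : ℂ → ℂ} (hf : TranscendentalEntire f) :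
    Tendsto (maxMod f) atTop atTop := by
  refine tendsto_atTop.mpr fun C => ?_
  obtain ⟨r₀, hr₀, hC⟩ : ∃ r₀, 0 ≤ r₀ ∧ C ≤ maxMod f r₀ := by
    by_contra! h
    have hbdd : Bornology.IsBounded (Set.range f) :=
      isBounded_iff_forall_norm_le.mpr ⟨C, by
        rintro _ ⟨z, rfl⟩
        exact (norm_le_maxMod hf.1.continuous z).trans (h ‖z‖ (norm_nonneg z)).le⟩
    obtain ⟨c, hc⟩ := hf.1.exists_eq_const_of_bounded hbdd
    exact hf.2 ⟨Polynomial.C c, fun z => by simp [hc]⟩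
  filter_upwards [eventually_ge_atTop r₀] with r hr
  exact hC.trans (maxMod_mono hf.1 hr₀ hr)

lemma rpow_mul_log_rpow_le_self {m L : ℝ} (hm : 0 < m) (hL : 1 ≤ L) :
    (1 / (2 * m) * L ^ (1 / (2 * m)) * Real.log L) ^ m ≤ L := by
  have hε : 0 < 1 / (2 * m) := by positivity
  have hlog : 1 / (2 * m) * Real.log L ≤ L ^ (1 / (2 * m)) := by
    have := Real.log_le_rpow_div (zero_le_one.trans hL) hε
    rwa [le_div_iff₀ hε, mul_comm] at this
  have hL₀ : 0 ≤ L := zero_le_one.trans hL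
  have hbase : 1 / (2 * m) * L ^ (1 / (2 * m)) * Real.log L
      ≤ L ^ (1 / (2 * m)) * L ^ (1 / (2 * m)) := by
    rw [mul_right_comm, mul_comm]
    exact mul_le_mul_of_nonneg_left hlog (by positivity)
  calc (1 / (2 * m) * L ^ (1 / (2 * m)) * Real.log L) ^ m
      ≤ (L ^ (1 / (2 * m)) * L ^ (1 / (2 * m))) ^ m :=
        Real.rpow_le_rpow (by have := Real.log_nonneg hL; positivity) hbase hm.le
    _ = (L ^ m⁻¹) ^ m := by
        rw [← Real.rpow_add' hL₀ (by positivity)]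
        congr 2
        field_simp
        ring
    _ = L := Real.rpow_inv_rpow hL₀ hm.ne'

lemma one_div_mul_rpow_mul_log {m r : ℝ} (hr : 0 < r) :
    1 / m * r ^ (1 / m) * Real.log r = r ^ (1 / m) * Real.log (r ^ (1 / m)) := by
  rw [Real.log_rpow hr]
  ring

/-- For a transcendental entire `f` and `m > 1`, for all sufficiently large `r`,
`M((1/(2m)) r^{1/(2m)} log r, f) ≥ ((1/(2m)) M(r^{1/(2m)},f)^{1/(2m)} log M(r^{1/(2m)},f))^m`. -/
theorem maxMod_log_power_estimate (f : ℂ → ℂ) (hf : TranscendentalEntire f)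
    (m : ℝ) (hm : 1 < m) :
    ∀ᶠ r : ℝ in atTop,
      maxMod f ((1 / (2 * m)) * r ^ (1 / (2 * m)) * Real.log r) ≥
        ((1 / (2 * m)) * (maxMod f (r ^ (1 / (2 * m)))) ^ (1 / (2 * m)) *
          Real.log (maxMod f (r ^ (1 / (2 * m))))) ^ m := by
  have hm₀ : 0 < m := zero_lt_one.trans hm
  have hs : Tendsto (fun r : ℝ => r ^ (1 / (2 * m))) atTop atTop :=
    tendsto_rpow_atTop (by positivity)
  filter_upwards [eventually_gt_atTop 0, hs.eventually_ge_atTop (Real.exp 1),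
    (hf.tendsto_maxMod_atTop.comp hs).eventually_ge_atTop 1] with r hr hse hL
  set s := r ^ (1 / (2 * m))
  have hs₀ : 0 < s := Real.rpow_pos_of_pos hr _
  have hlog_s : 1 ≤ Real.log s := (Real.le_log_iff_exp_le hs₀).mpr hse
  rw [ge_iff_le, one_div_mul_rpow_mul_log hr]
  calc _ ≤ maxMod f s := rpow_mul_log_rpow_le_self hm₀ hL
    _ ≤ maxMod f (s * Real.log s) :=
        maxMod_mono hf.1 hs₀.le (le_mul_of_one_le_right hs₀.le hlog_s)
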